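/- If Ẑ_1 denotes the count of 1-strings in Bern(a,b) (a>0, b>0), then E[Ẑ_1] = a²/(a+b) and E[Ẑ_1²] = a³(a+1)/[(a+b)(a+b+1)] + a²/(a+b). -/

import Mathlib

open Finset MeasureTheory ProbabilityTheory
open scoped ENNReal

/-!
Write `Ẑ_1 = ∑ₙ Xₙ` with `Xₙ = Y_{n+1} Y_{n+2}`. As the `Xₙ` are `0/1`-valued,
`Ẑ_1² = Ẑ_1 + 2 ∑ₙ ∑ₖ Xₙ X_{n+k+1}`, and by independence `E[Xₘ Xₙ]` is the product of the success
probabilities `p_j = a / (c + j)`, `c = a + b`, over the distinct indices involved: three when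
`|m - n| = 1`, four when `|m - n| ≥ 2`. All resulting series telescope, starting from
`p_j p_{j+1} = a² (1/(c+j) - 1/(c+j+1))`. In particular the tail `∑_{j ≥ i} p_j p_{j+1} = a² / (c+i)`
turns the correlations at distance `≥ 2` into `a` times those at distance `1`, which add up to
`∑ₙ pₙ p_{n+1} p_{n+2} = a³ / (2c(c+1))`.
-/

open Filter Topology

theorem hasSum_sub_succ_of_antitone {f : ℕ → ℝ} (hf : Antitone f)
    (hlim : Tendsto f atTop (𝓝 0)) : HasSum (fun n ↦ f n - f (n + 1)) (f 0) := by
  rw [hasSum_iff_tendsto_nat_of_nonneg (fun n ↦ sub_nonneg.2 (hf n.le_succ))]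
  simp_rw [Finset.sum_range_sub']
  simpa using tendsto_const_nhds.sub hlim

theorem hasSum_one_div_sub_one_div_succ {g : ℕ → ℝ} (hg0 : 0 < g 0) (hg : Monotone g)
    (hlim : Tendsto g atTop atTop) :
    HasSum (fun n ↦ 1 / g n - 1 / g (n + 1)) (1 / g 0) :=
  hasSum_sub_succ_of_antitone
    (fun _ _ hmn ↦ one_div_le_one_div_of_le (hg0.trans_le (hg (Nat.zero_le _))) (hg hmn))
    (tendsto_const_nhds.div_atTop hlim)

theorem hasSum_one_div_mul_succ {c : ℝ} (hc : 0 < c) :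
    HasSum (fun n : ℕ ↦ 1 / ((c + n) * (c + n + 1))) (1 / c) := by
  have hmono : Monotone fun n : ℕ ↦ c + n := fun _ _ h ↦ by dsimp only; gcongr
  have hlim : Tendsto (fun n : ℕ ↦ c + n) atTop atTop :=
    tendsto_atTop_add_const_left _ c tendsto_natCast_atTop_atTop
  convert hasSum_one_div_sub_one_div_succ (by simpa using hc) hmono hlim using 1
  · funext n
    have : 0 < c + n := by positivity
    push_cast
    field_simp
    ring
  · simp

theorem hasSum_one_div_mul_succ_mul_succ {c : ℝ} (hc : 0 < c) :
    HasSum (fun n : ℕ ↦ 1 / ((c + n) * (c + n + 1) * (c + n + 2))) (1 / (2 * c * (c + 1))) := by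
  have hmono : Monotone fun n : ℕ ↦ 2 * (c + n) * (c + n + 1) := fun _ _ h ↦ by
    have : (0 : ℝ) ≤ c := hc.le
    dsimp only
    gcongr
  have hlim : Tendsto (fun n : ℕ ↦ 2 * (c + n) * (c + n + 1)) atTop atTop := by
    have h := tendsto_atTop_add_const_left _ c tendsto_natCast_atTop_atTop
    exact (h.const_mul_atTop two_pos).atTop_mul_atTop₀ (tendsto_atTop_add_const_right _ 1 h)
  convert hasSum_one_div_sub_one_div_succ (by simp only [Nat.cast_zero, add_zero]; positivity) hmono hlim using 1
  · funext n
    have : 0 < c + n := by positivity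
    push_cast
    field_simp
    ring
  · simp

namespace ENNReal

theorem natCast_mul_self_of_le_one {k : ℕ} (hk : k ≤ 1) : (k : ℝ≥0∞) * k = k := by
  interval_cases k <;> simp

theorem tsum_ite_lt (m : ℕ) (g : ℕ → ℝ≥0∞) :
    ∑' n, (if m < n then g n else 0) = ∑' k, g (m + k + 1) := by
  rw [← ENNReal.summable.sum_add_tsum_nat_add' (k := m + 1)]
  have hlow : ∑ i ∈ range (m + 1), (if m < i then g i else 0) = 0 :=
    Finset.sum_eq_zero fun i hi ↦ if_neg (by simp at hi; omega)
  rw [hlow, zero_add]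
  refine tsum_congr fun k ↦ ?_
  rw [if_pos (by omega)]
  congr 1
  omega

theorem tsum_tsum_eq_diag_add_offDiag (f : ℕ → ℕ → ℝ≥0∞) :
    ∑' m, ∑' n, f m n
      = ∑' n, f n n + (∑' n, ∑' k, f n (n + k + 1) + ∑' n, ∑' k, f (n + k + 1) n) := by
  have hsplit (m n : ℕ) : f m n = (if n = m then f m n else 0)
      + ((if m < n then f m n else 0) + (if n < m then f m n else 0)) := by
    rcases lt_trichotomy m n with h | rfl | h
    · simp [h, h.ne', h.not_gt]
    · simp
    · simp [h, h.ne, h.not_gt]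
  conv_lhs => enter [1, m, 1, n]; rw [hsplit m n]
  simp_rw [ENNReal.tsum_add, tsum_ite_eq, tsum_ite_lt]
  rw [ENNReal.tsum_comm (f := fun m n ↦ if n < m then f m n else 0)]
  simp_rw [tsum_ite_lt]

theorem sq_tsum (x : ℕ → ℝ≥0∞) :
    (∑' n, x n) ^ 2 = ∑' n, x n ^ 2 + 2 * ∑' n, ∑' k, x n * x (n + k + 1) := by
  rw [sq, ← ENNReal.tsum_mul_right, two_mul]
  conv_lhs => enter [1, m]; rw [← ENNReal.tsum_mul_left]
  rw [tsum_tsum_eq_diag_add_offDiag]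
  simp_rw [sq, mul_comm (x (_ + _ + 1))]

end ENNReal

section IndependentIndicators

variable {Ω ι : Type*} [MeasurableSpace Ω] {μ : Measure Ω} {Y : ι → Ω → ℕ}

theorem lintegral_natCast_of_le_one {Z : Ω → ℕ} (hZ : Measurable Z) (hval : ∀ ω, Z ω ≤ 1) :
    ∫⁻ ω, (Z ω : ℝ≥0∞) ∂μ = μ {ω | Z ω = 1} := by
  have hind : (fun ω ↦ (Z ω : ℝ≥0∞)) = {ω | Z ω = 1}.indicator 1 := by
    funext ω
    rcases Nat.le_one_iff_eq_zero_or_eq_one.1 (hval ω) with h | h <;> simp [h, Set.indicator]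
  rw [hind]
  exact lintegral_indicator_one (hZ (measurableSet_singleton 1))

theorem lintegral_prod_natCast_of_iIndepFun (hmeas : ∀ i, Measurable (Y i))
    (hval : ∀ i ω, Y i ω ≤ 1) (hindep : iIndepFun Y μ) (s : Finset ι) :
    ∫⁻ ω, ∏ i ∈ s, (Y i ω : ℝ≥0∞) ∂μ = ∏ i ∈ s, μ {ω | Y i ω = 1} :=
  calc ∫⁻ ω, ∏ i ∈ s, (Y i ω : ℝ≥0∞) ∂μ = ∏ i ∈ s, ∫⁻ ω, (Y i ω : ℝ≥0∞) ∂μ :=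
        lintegral_prod_eq_prod_lintegral_of_indepFun s (fun i ω ↦ (Y i ω : ℝ≥0∞))
          (hindep.comp _ fun _ ↦ measurable_from_nat) fun i ↦ measurable_from_nat.comp (hmeas i)
    _ = ∏ i ∈ s, μ {ω | Y i ω = 1} :=
        prod_congr rfl fun i _ ↦ lintegral_natCast_of_le_one (hmeas i) (hval i)

end IndependentIndicators

section OneStrings

variable {Ω : Type*} {Y : ℕ → Ω → ℕ}

def oneString (Y : ℕ → Ω → ℕ) (n : ℕ) (ω : Ω) : ℝ≥0∞ := ((Y (n + 1) ω * Y (n + 2) ω : ℕ) : ℝ≥0∞)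

theorem oneString_mul_self (hval : ∀ n ω, Y n ω ≤ 1) (n : ℕ) (ω : Ω) :
    oneString Y n ω * oneString Y n ω = oneString Y n ω :=
  ENNReal.natCast_mul_self_of_le_one (mul_le_one' (hval _ ω) (hval _ ω))

variable [MeasurableSpace Ω] {μ : Measure Ω}

theorem measurable_oneString (hmeas : ∀ n, Measurable (Y n)) (n : ℕ) :
    Measurable (oneString Y n) :=
  measurable_from_nat.comp ((hmeas (n + 1)).mul (hmeas (n + 2)))

theorem lintegral_oneString (hmeas : ∀ n, Measurable (Y n)) (hval : ∀ n ω, Y n ω ≤ 1)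
    (hindep : iIndepFun Y μ) (n : ℕ) :
    ∫⁻ ω, oneString Y n ω ∂μ = μ {ω | Y (n + 1) ω = 1} * μ {ω | Y (n + 2) ω = 1} := by
  have h := lintegral_prod_natCast_of_iIndepFun hmeas hval hindep {n + 1, n + 2}
  simp only [prod_pair (show n + 1 ≠ n + 2 by omega)] at h
  simpa only [oneString, Nat.cast_mul] using h

theorem lintegral_oneString_mul_succ (hmeas : ∀ n, Measurable (Y n))
    (hval : ∀ n ω, Y n ω ≤ 1) (hindep : iIndepFun Y μ) (n : ℕ) :
    ∫⁻ ω, oneString Y n ω * oneString Y (n + 1) ω ∂μ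
      = μ {ω | Y (n + 1) ω = 1} * μ {ω | Y (n + 2) ω = 1} * μ {ω | Y (n + 3) ω = 1} := by
  have h := lintegral_prod_natCast_of_iIndepFun hmeas hval hindep {n + 1, n + 2, n + 3}
  simp only [prod_insert (show n + 1 ∉ ({n + 2, n + 3} : Finset ℕ) by simp),
    prod_pair (show n + 2 ≠ n + 3 by omega), ← mul_assoc] at h
  rw [← h]
  refine lintegral_congr fun ω ↦ ?_
  change (Y (n + 1) ω * Y (n + 2) ω : ℕ) * ((Y (n + 2) ω * Y (n + 3) ω : ℕ) : ℝ≥0∞) = _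
  push_cast
  calc _ = (Y (n + 1) ω : ℝ≥0∞) * (Y (n + 2) ω * Y (n + 2) ω) * Y (n + 3) ω := by ring
    _ = _ := by rw [ENNReal.natCast_mul_self_of_le_one (hval _ ω)]

theorem lintegral_oneString_mul_add_two (hmeas : ∀ n, Measurable (Y n))
    (hval : ∀ n ω, Y n ω ≤ 1) (hindep : iIndepFun Y μ) (n k : ℕ) :
    ∫⁻ ω, oneString Y n ω * oneString Y (n + 2 + k) ω ∂μ
      = μ {ω | Y (n + 1) ω = 1} * μ {ω | Y (n + 2) ω = 1}
        * (μ {ω | Y (n + 2 + k + 1) ω = 1} * μ {ω | Y (n + 2 + k + 2) ω = 1}) := by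
  have h := lintegral_prod_natCast_of_iIndepFun hmeas hval hindep
    {n + 1, n + 2, n + 2 + k + 1, n + 2 + k + 2}
  simp only [prod_insert (show n + 1 ∉ ({n + 2, n + 2 + k + 1, n + 2 + k + 2} : Finset ℕ) by
      simp; omega),
    prod_insert (show n + 2 ∉ ({n + 2 + k + 1, n + 2 + k + 2} : Finset ℕ) by simp; omega),
    prod_pair (show n + 2 + k + 1 ≠ n + 2 + k + 2 by omega), ← mul_assoc] at h
  simpa only [oneString, Nat.cast_mul, ← mul_assoc] using h

theorem lintegral_tsum_oneString (hmeas : ∀ n, Measurable (Y n)) (hval : ∀ n ω, Y n ω ≤ 1)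
    (hindep : iIndepFun Y μ) {p : ℕ → ℝ≥0∞} (hp : ∀ k, μ {ω | Y (k + 1) ω = 1} = p k) :
    ∫⁻ ω, ∑' n, oneString Y n ω ∂μ = ∑' n, p n * p (n + 1) := by
  rw [lintegral_tsum fun n ↦ (measurable_oneString hmeas n).aemeasurable]
  refine tsum_congr fun n ↦ ?_
  rw [lintegral_oneString hmeas hval hindep, ← hp, ← hp]

theorem lintegral_sq_tsum_oneString (hmeas : ∀ n, Measurable (Y n)) (hval : ∀ n ω, Y n ω ≤ 1)
    (hindep : iIndepFun Y μ) {p : ℕ → ℝ≥0∞} (hp : ∀ k, μ {ω | Y (k + 1) ω = 1} = p k) :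
    ∫⁻ ω, (∑' n, oneString Y n ω) ^ 2 ∂μ
      = ∑' n, p n * p (n + 1) + 2 * ∑' n, (p n * p (n + 1) * p (n + 2)
          + ∑' k, p n * p (n + 1) * (p (n + 2 + k) * p (n + 2 + k + 1))) := by
  have hX := measurable_oneString hmeas
  simp_rw [ENNReal.sq_tsum, sq, oneString_mul_self hval]
  rw [lintegral_add_left (Measurable.tsum hX), lintegral_const_mul' _ _ ENNReal.ofNat_ne_top,
    lintegral_tsum_oneString hmeas hval hindep hp,
    lintegral_tsum (f := fun n ω ↦ ∑' k, oneString Y n ω * oneString Y (n + k + 1) ω)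
      fun n ↦ (Measurable.tsum fun k ↦ (hX n).mul (hX _)).aemeasurable]
  congr 2
  refine tsum_congr fun n ↦ ?_
  rw [lintegral_tsum (f := fun k ω ↦ oneString Y n ω * oneString Y (n + k + 1) ω)
    fun k ↦ ((hX n).mul (hX _)).aemeasurable, tsum_eq_zero_add' ENNReal.summable]
  congr 1
  · rw [lintegral_oneString_mul_succ hmeas hval hindep, ← hp, ← hp, ← hp]
  · refine tsum_congr fun k ↦ ?_
    rw [show n + (k + 1) + 1 = n + 2 + k by omega,
      lintegral_oneString_mul_add_two hmeas hval hindep, ← hp, ← hp, ← hp, ← hp]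

end OneStrings

/-- `bernProb a (a + b) k` is the probability `a / (a + b + n - 1)` of `Y n = 1` for `n = k + 1`. -/
noncomputable def bernProb (a c : ℝ) (k : ℕ) : ℝ≥0∞ := ENNReal.ofReal (a / (c + k))

section BernProb

variable {a c : ℝ}

theorem bernProb_add (n k : ℕ) : bernProb a c (n + k) = bernProb a (c + n) k := by
  rw [bernProb, bernProb, Nat.cast_add, add_assoc]

theorem tsum_bernProb_mul_succ (ha : 0 ≤ a) (hc : 0 < c) :
    ∑' n, bernProb a c n * bernProb a c (n + 1) = ENNReal.ofReal (a ^ 2 / c) := by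
  have hterm (n : ℕ) : bernProb a c n * bernProb a c (n + 1)
      = ENNReal.ofReal (a ^ 2 * (1 / ((c + n) * (c + n + 1)))) := by
    rw [bernProb, bernProb, ← ENNReal.ofReal_mul (by positivity)]
    push_cast
    congr 1
    field_simp
    ring
  have hsum := (hasSum_one_div_mul_succ hc).mul_left (a ^ 2)
  rw [tsum_congr hterm, ← ENNReal.ofReal_tsum_of_nonneg (fun n ↦ by positivity) hsum.summable,
    hsum.tsum_eq, mul_one_div]

theorem tsum_bernProb_mul_succ_mul_succ (ha : 0 ≤ a) (hc : 0 < c) :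
    ∑' n, bernProb a c n * bernProb a c (n + 1) * bernProb a c (n + 2)
      = ENNReal.ofReal (a ^ 3 / (2 * c * (c + 1))) := by
  have hterm (n : ℕ) : bernProb a c n * bernProb a c (n + 1) * bernProb a c (n + 2)
      = ENNReal.ofReal (a ^ 3 * (1 / ((c + n) * (c + n + 1) * (c + n + 2)))) := by
    rw [bernProb, bernProb, bernProb, ← ENNReal.ofReal_mul (by positivity),
      ← ENNReal.ofReal_mul (by positivity)]
    push_cast
    congr 1
    field_simp
    ring
  have hsum := (hasSum_one_div_mul_succ_mul_succ hc).mul_left (a ^ 3)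
  rw [tsum_congr hterm, ← ENNReal.ofReal_tsum_of_nonneg (fun n ↦ by positivity) hsum.summable,
    hsum.tsum_eq, mul_one_div]

theorem tsum_bernProb_correlations (ha : 0 ≤ a) (hc : 0 < c) :
    ∑' n, (bernProb a c n * bernProb a c (n + 1) * bernProb a c (n + 2)
        + ∑' k, bernProb a c n * bernProb a c (n + 1)
          * (bernProb a c (n + 2 + k) * bernProb a c (n + 2 + k + 1)))
      = ENNReal.ofReal ((a + 1) * a ^ 3 / (2 * c * (c + 1))) := by
  have htail (n : ℕ) : ∑' k, bernProb a c (n + 2 + k) * bernProb a c (n + 2 + k + 1)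
      = ENNReal.ofReal a * bernProb a c (n + 2) := by
    have hcn : 0 < c + ↑(n + 2) := by positivity
    rw [bernProb, ← ENNReal.ofReal_mul ha, mul_div_assoc', ← sq,
      ← tsum_bernProb_mul_succ ha hcn]
    refine tsum_congr fun k ↦ ?_
    rw [add_assoc (n + 2) k 1, bernProb_add, bernProb_add]
  have hterm (n : ℕ) : bernProb a c n * bernProb a c (n + 1) * bernProb a c (n + 2)
        + ∑' k, bernProb a c n * bernProb a c (n + 1)
          * (bernProb a c (n + 2 + k) * bernProb a c (n + 2 + k + 1))
      = (ENNReal.ofReal a + 1) * (bernProb a c n * bernProb a c (n + 1) * bernProb a c (n + 2)) := by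
    rw [ENNReal.tsum_mul_left, htail]
    ring
  rw [tsum_congr hterm, ENNReal.tsum_mul_left, tsum_bernProb_mul_succ_mul_succ ha hc,
    ← ENNReal.ofReal_one, ← ENNReal.ofReal_add ha zero_le_one, ← ENNReal.ofReal_mul (by positivity),
    mul_div_assoc]

end BernProb

theorem stmt7_general {Ω : Type*} [MeasurableSpace Ω] (μ : Measure Ω)
    (a b : ℝ) (ha : 0 < a) (hb : 0 < b)
    (Y : ℕ → Ω → ℕ) (hmeas : ∀ n, Measurable (Y n)) (hval : ∀ n ω, Y n ω ≤ 1)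
    (hindep : iIndepFun Y μ)
    (hp : ∀ n : ℕ, 1 ≤ n → μ {ω | Y n ω = 1} = ENNReal.ofReal (a / (a + b + n - 1))) :
    (∫⁻ ω, (∑' n : ℕ, ((Y (n + 1) ω * Y (n + 2) ω : ℕ) : ℝ≥0∞)) ∂μ
        = ENNReal.ofReal (a ^ 2 / (a + b)))
    ∧ (∫⁻ ω, (∑' n : ℕ, ((Y (n + 1) ω * Y (n + 2) ω : ℕ) : ℝ≥0∞)) ^ 2 ∂μ
        = ENNReal.ofReal (a ^ 3 * (a + 1) / ((a + b) * (a + b + 1)) + a ^ 2 / (a + b))) := by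
  have hc : 0 < a + b := add_pos ha hb
  have hprob (k : ℕ) : μ {ω | Y (k + 1) ω = 1} = bernProb a (a + b) k := by
    rw [hp (k + 1) k.succ_pos, bernProb, Nat.cast_succ, add_sub_assoc, add_sub_cancel_right]
  constructor
  · rw [← tsum_bernProb_mul_succ ha.le hc]
    exact lintegral_tsum_oneString hmeas hval hindep hprob
  · change ∫⁻ ω, (∑' n, oneString Y n ω) ^ 2 ∂μ = _
    rw [lintegral_sq_tsum_oneString hmeas hval hindep hprob, tsum_bernProb_mul_succ ha.le hc,
      tsum_bernProb_correlations ha.le hc, ← ENNReal.ofReal_ofNat 2,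
      ← ENNReal.ofReal_mul zero_le_two, ← ENNReal.ofReal_add (by positivity) (by positivity),
      add_comm]
    congr 1
    field_simp

/-- If `Ẑ_1 = ∑_{n ≥ 1} Y_n Y_{n+1}` denotes the count of 1-strings in `Bern(a,b)`
(`a > 0`, `b > 0`, i.e. the independent Bernoulli sequence with
`P(Y_n = 1) = a/(a+b+n-1)`), then `E[Ẑ_1] = a²/(a+b)` and
`E[Ẑ_1²] = a³(a+1)/[(a+b)(a+b+1)] + a²/(a+b)`. -/
theorem stmt7 {Ω : Type*} [MeasurableSpace Ω] (μ : Measure Ω) [IsProbabilityMeasure μ]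
    (a b : ℝ) (ha : 0 < a) (hb : 0 < b)
    (Y : ℕ → Ω → ℕ) (hmeas : ∀ n, Measurable (Y n)) (hval : ∀ n ω, Y n ω ≤ 1)
    (hindep : iIndepFun Y μ)
    (hp : ∀ n : ℕ, 1 ≤ n → μ {ω | Y n ω = 1} = ENNReal.ofReal (a / (a + b + n - 1))) :
    (∫⁻ ω, (∑' n : ℕ, ((Y (n + 1) ω * Y (n + 2) ω : ℕ) : ℝ≥0∞)) ∂μ
        = ENNReal.ofReal (a ^ 2 / (a + b)))
    ∧ (∫⁻ ω, (∑' n : ℕ, ((Y (n + 1) ω * Y (n + 2) ω : ℕ) : ℝ≥0∞)) ^ 2 ∂μ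
        = ENNReal.ofReal (a ^ 3 * (a + 1) / ((a + b) * (a + b + 1)) + a ^ 2 / (a + b))) :=
  stmt7_general μ a b ha hb Y hmeas hval hindep hp
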